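/- arXiv:2310.17424 — 3 statements merged into one kernel-verified Lean document; each statement's English description precedes it below -/
import Mathlib

section
/- For every t ≥ 0 and x ∈ ℝ², ∫_{ℝ²} 1/(|y|(e^t+|x−y|)²) dy ≤ C·e^{−t}, where C is a uniform constant independent of t and x. -/
/-!
Substituting `y = a • z` with `a = exp t` shows that the integral equals `a⁻¹` times the same
integral with `a = 1`, taken at the point `a⁻¹ • x`. For `a = 1` the integrand is bounded a.e. by
`4 (k ‖y‖ + k ‖x - y‖)` with `k r = 1 / (r (1 + r)²)`, according as `1 + ‖y‖ ≤ 2 (1 + ‖x - y‖)` or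
not, and `k ‖·‖` is integrable on `ℝ²` because its radial profile `r k r = (1 + r)⁻²` is integrable
on `(0, ∞)`. Translation invariance then bounds the integral by `8 ∫ k ‖·‖`, uniformly in `x`.
-/

open Real MeasureTheory

noncomputable section

abbrev E2 := EuclideanSpace ℝ (Fin 2)

def normPotential (a : ℝ) (x : E2) : ℝ := ∫ y : E2, 1 / (‖y‖ * (a + ‖x - y‖) ^ 2)

lemma normPotential_eq_inv_mul {a : ℝ} (ha : 0 < a) (x : E2) :
    normPotential a x = a⁻¹ * normPotential 1 (a⁻¹ • x) := by
  have h := Measure.integral_comp_smul volume (fun y : E2 => 1 / (‖y‖ * (a + ‖x - y‖) ^ 2)) a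
  have hscale : ∀ z : E2, 1 / (‖a • z‖ * (a + ‖x - a • z‖) ^ 2)
      = (a ^ 3)⁻¹ * (1 / (‖z‖ * (1 + ‖a⁻¹ • x - z‖) ^ 2)) := fun z => by
    have : x - a • z = a • (a⁻¹ • x - z) := by
      rw [smul_sub, smul_inv_smul₀ ha.ne']
    rw [this, norm_smul, norm_smul, Real.norm_of_nonneg ha.le]
    field_simp
  rw [funext hscale, integral_const_mul, finrank_euclideanSpace_fin,
    abs_of_pos (by positivity), smul_eq_mul] at h
  unfold normPotential
  rw [← mul_inv_cancel_left₀ (pow_ne_zero 2 ha.ne') (∫ y : E2, _), ← h]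
  field_simp

def radialKernel (r : ℝ) : ℝ := 1 / (r * (1 + r) ^ 2)

lemma one_div_mul_one_add_sq_le_radialKernel {u v : ℝ} (hu : 0 < u) (hv : 0 < v) :
    1 / (u * (1 + v) ^ 2) ≤ 4 * (radialKernel u + radialKernel v) := by
  unfold radialKernel
  rcases le_or_gt (1 + u) (2 * (1 + v)) with huv | huv
  · have : 1 / (u * (1 + v) ^ 2) ≤ 4 * (1 / (u * (1 + u) ^ 2)) := by
      rw [← div_eq_mul_one_div, div_le_div_iff₀ (by positivity) (by positivity)]
      nlinarith [mul_le_mul_of_nonneg_left (pow_le_pow_left₀ (by positivity) huv 2) hu.le]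
    linarith [show 0 ≤ 4 * (1 / (v * (1 + v) ^ 2)) by positivity]
  · have : 1 / (u * (1 + v) ^ 2) ≤ 1 / (v * (1 + v) ^ 2) :=
      one_div_le_one_div_of_le (by positivity) (by gcongr; linarith)
    linarith [show 0 ≤ 1 / (u * (1 + u) ^ 2) by positivity,
      show 0 ≤ 1 / (v * (1 + v) ^ 2) by positivity]

lemma integrable_radialKernel_norm : Integrable (fun z : E2 => radialKernel ‖z‖) := by
  rw [integrable_fun_norm_addHaar, finrank_euclideanSpace_fin]
  have h := (integrable_one_add_norm (E := ℝ) (μ := volume) (r := 2) (by simp)).integrableOn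
    (s := Set.Ioi 0)
  refine h.congr_fun (fun y (hy : 0 < y) => ?_) measurableSet_Ioi
  simp only [norm_eq_abs, abs_of_pos hy, rpow_neg_ofNat, zpow_neg, zpow_ofNat,
    Nat.add_one_sub_one, pow_one, radialKernel, smul_eq_mul]
  field_simp

lemma normPotential_one_le (x : E2) :
    normPotential 1 x ≤ 8 * ∫ z : E2, radialKernel ‖z‖ := by
  have hint := integrable_radialKernel_norm
  have hbound : ∀ᵐ z : E2, 1 / (‖z‖ * (1 + ‖x - z‖) ^ 2)
      ≤ 4 * (radialKernel ‖z‖ + radialKernel ‖x - z‖) := by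
    filter_upwards [(Set.countable_singleton (0 : E2)).ae_notMem volume,
      (Set.countable_singleton x).ae_notMem volume] with z hz0 hzx
    exact one_div_mul_one_add_sq_le_radialKernel (norm_pos_iff.2 hz0)
      (norm_pos_iff.2 (sub_ne_zero.2 (Ne.symm hzx)))
  calc normPotential 1 x
      ≤ ∫ z : E2, 4 * (radialKernel ‖z‖ + radialKernel ‖x - z‖) :=
        integral_mono_of_nonneg (.of_forall fun z => by positivity)
          ((hint.add (hint.comp_sub_left x)).const_mul 4) hbound
    _ = 8 * ∫ z : E2, radialKernel ‖z‖ := by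
        rw [integral_const_mul, integral_add hint (hint.comp_sub_left x),
          integral_sub_left_eq_self (fun z : E2 => radialKernel ‖z‖)]
        ring

/-- For every `t ≥ 0` and `x ∈ ℝ²`,
`∫_{ℝ²} 1/(|y|(e^t+|x−y|)²) dy ≤ C e^{−t}` for a uniform constant `C`. -/
theorem stmt1 :
    ∃ C : ℝ, 0 < C ∧ ∀ t : ℝ, 0 ≤ t → ∀ x : E2,
      (∫ y : E2, 1 / (‖y‖ * (Real.exp t + ‖x - y‖) ^ 2)) ≤ C * Real.exp (-t) := by
  refine ⟨max (8 * ∫ z : E2, radialKernel ‖z‖) 1, lt_max_of_lt_right one_pos, fun t _ x => ?_⟩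
  change normPotential (exp t) x ≤ _
  rw [normPotential_eq_inv_mul (exp_pos t), exp_neg, mul_comm]
  gcongr
  exact (normPotential_one_le _).trans (le_max_left _ _)
end
end

section
/- For any first-order vector field Z ∈ {U_i, S_i, L, R₁₂} with time-dependent coefficients as defined, the commutator with the nonlinear transport operator T_φ := ∂_t + v·∇_x + x·∇_v − μ∇_xφ(t,x)·∇_v satisfies [T_φ, Z] = μ ∇_x(Zφ + c_Z φ)·∇_v, where c_L = −2 and c_Z = 0 for Z ≠ L, and Zφ denotes the action of the associated macroscopic vector field (U_{i,x}=e^t∂_{xⁱ}, S_{i,x}=e^{−t}∂_{xⁱ}, L_x=Σxⁱ∂_{xⁱ}, R₁₂,ₓ=x¹∂_{x²}−x²∂_{x¹}) on φ(t,x). -/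
/-!
Each operator in the statement is differentiation along a vector field on phase space
`(t, x, v)`: `T_φ` along `(1, v, x - μ ∇ₓφ)` and `Z` along its own field. For `C²` functions the
commutator of two such derivations is differentiation along the Lie bracket of the fields
(symmetry of second derivatives), so everything reduces to computing `[T_φ, Z]` as vector fields.
The fields `Z` are symmetries of the free part `(1, v, x)`, so only the force term `-μ ∇ₓφ · ∇_v`
contributes; its bracket with `Z` is a pure `∇_v` field whose coefficients are
`∂ₓₖ(Zφ + c_Z φ)`, once more by the symmetry of the second derivatives of `φ`.
-/

open Real

noncomputable section

def pt (F : ℝ → E2 → E2 → ℝ) (t : ℝ) (x v : E2) : ℝ :=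
  deriv (fun τ => F τ x v) t

def px (F : ℝ → E2 → E2 → ℝ) (i : Fin 2) (t : ℝ) (x v : E2) : ℝ :=
  deriv (fun h : ℝ => F t (x + h • EuclideanSpace.single i (1 : ℝ)) v) 0

def pv (F : ℝ → E2 → E2 → ℝ) (i : Fin 2) (t : ℝ) (x v : E2) : ℝ :=
  deriv (fun h : ℝ => F t x (v + h • EuclideanSpace.single i (1 : ℝ))) 0

/-- Partial derivative in the `i`-th `x`-coordinate of a macroscopic function `ψ(t,x)`. -/
def pxM (ψ : ℝ → E2 → ℝ) (i : Fin 2) (t : ℝ) (x : E2) : ℝ :=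
  deriv (fun h : ℝ => ψ t (x + h • EuclideanSpace.single i (1 : ℝ))) 0

/-- The nonlinear transport operator
`T_φ = ∂_t + v·∇_x + x·∇_v − μ∇_xφ(t,x)·∇_v`. -/
def Tphi (φ : ℝ → E2 → ℝ) (μ : ℝ) (F : ℝ → E2 → E2 → ℝ) (t : ℝ) (x v : E2) : ℝ :=
  pt F t x v + (∑ i, v i * px F i t x v) + (∑ i, x i * pv F i t x v)
    - μ * ∑ i, pxM φ i t x * pv F i t x v

/-- Microscopic vector fields. -/
def Uop (i : Fin 2) (F : ℝ → E2 → E2 → ℝ) : ℝ → E2 → E2 → ℝ :=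
  fun t x v => Real.exp t * (px F i t x v + pv F i t x v)

def Sop (i : Fin 2) (F : ℝ → E2 → E2 → ℝ) : ℝ → E2 → E2 → ℝ :=
  fun t x v => Real.exp (-t) * (px F i t x v - pv F i t x v)

def Lop (F : ℝ → E2 → E2 → ℝ) : ℝ → E2 → E2 → ℝ :=
  fun t x v => ∑ i, (x i * px F i t x v + v i * pv F i t x v)

def Rop (F : ℝ → E2 → E2 → ℝ) : ℝ → E2 → E2 → ℝ :=
  fun t x v =>
    x 0 * px F 1 t x v - x 1 * px F 0 t x v + v 0 * pv F 1 t x v - v 1 * pv F 0 t x v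

/-- Associated macroscopic vector fields acting on `φ(t,x)`. -/
def UxOp (i : Fin 2) (ψ : ℝ → E2 → ℝ) : ℝ → E2 → ℝ :=
  fun t x => Real.exp t * pxM ψ i t x

def SxOp (i : Fin 2) (ψ : ℝ → E2 → ℝ) : ℝ → E2 → ℝ :=
  fun t x => Real.exp (-t) * pxM ψ i t x

def LxOp (ψ : ℝ → E2 → ℝ) : ℝ → E2 → ℝ :=
  fun t x => ∑ i, x i * pxM ψ i t x

def RxOp (ψ : ℝ → E2 → ℝ) : ℝ → E2 → ℝ :=
  fun t x => x 0 * pxM ψ 1 t x - x 1 * pxM ψ 0 t x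

open VectorField

abbrev Phase := ℝ × E2 × E2
abbrev SpaceTime := ℝ × E2

def uncurryPhase (F : ℝ → E2 → E2 → ℝ) : Phase → ℝ := fun p => F p.1 p.2.1 p.2.2

def uncurrySpaceTime (ψ : ℝ → E2 → ℝ) : SpaceTime → ℝ := fun q => ψ q.1 q.2

def eT : Phase := (1, 0, 0)
def eX (i : Fin 2) : Phase := (0, EuclideanSpace.single i 1, 0)
def eV (i : Fin 2) : Phase := (0, 0, EuclideanSpace.single i 1)
def stX (i : Fin 2) : SpaceTime := (0, EuclideanSpace.single i 1)

def toSpaceTime : Phase →L[ℝ] SpaceTime :=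
  (ContinuousLinearMap.fst ℝ ℝ (E2 × E2)).prod
    ((ContinuousLinearMap.fst ℝ E2 E2).comp (ContinuousLinearMap.snd ℝ ℝ (E2 × E2)))

lemma toSpaceTime_apply (p : Phase) : toSpaceTime p = (p.1, p.2.1) := rfl
lemma toSpaceTime_eX (i : Fin 2) : toSpaceTime (eX i) = stX i := rfl
lemma toSpaceTime_eV (i : Fin 2) : toSpaceTime (eV i) = 0 := rfl

def partialX (g : SpaceTime → ℝ) (k : Fin 2) (q : SpaceTime) : ℝ := fderiv ℝ g q (stX k)

lemma fderiv_apply_stX (g : SpaceTime → ℝ) (q : SpaceTime) (k : Fin 2) :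
    fderiv ℝ g q (stX k) = partialX g k q := rfl

section Partials

variable {F : ℝ → E2 → E2 → ℝ} {t : ℝ} {x v : E2}

lemma pt_eq_fderiv (hF : DifferentiableAt ℝ (uncurryPhase F) (t, x, v)) :
    pt F t x v = fderiv ℝ (uncurryPhase F) (t, x, v) eT := by
  rw [← hF.lineDeriv_eq_fderiv, lineDeriv, pt]
  simpa [uncurryPhase, eT] using (deriv_comp_const_add (fun τ => F τ x v) t 0).symm

lemma px_eq_fderiv (hF : DifferentiableAt ℝ (uncurryPhase F) (t, x, v)) (i : Fin 2) :
    px F i t x v = fderiv ℝ (uncurryPhase F) (t, x, v) (eX i) := by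
  rw [← hF.lineDeriv_eq_fderiv, lineDeriv, px]
  simp [uncurryPhase, eX]

lemma pv_eq_fderiv (hF : DifferentiableAt ℝ (uncurryPhase F) (t, x, v)) (i : Fin 2) :
    pv F i t x v = fderiv ℝ (uncurryPhase F) (t, x, v) (eV i) := by
  rw [← hF.lineDeriv_eq_fderiv, lineDeriv, pv]
  simp [uncurryPhase, eV]

lemma pxM_eq_partialX {ψ : ℝ → E2 → ℝ} (hψ : DifferentiableAt ℝ (uncurrySpaceTime ψ) (t, x))
    (i : Fin 2) : pxM ψ i t x = partialX (uncurrySpaceTime ψ) i (t, x) := by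
  rw [partialX, ← hψ.lineDeriv_eq_fderiv, lineDeriv, pxM]
  simp [uncurrySpaceTime, stX]

end Partials

section PartialX

variable {g : SpaceTime → ℝ}

lemma partialX_snd_apply (j k : Fin 2) (q : SpaceTime) :
    partialX (fun q : SpaceTime => q.2 j) k q = (stX k).2 j :=
  congrArg (· (stX k)) ((EuclideanSpace.proj j).comp (ContinuousLinearMap.snd ℝ ℝ E2)).fderiv

lemma differentiable_partialX (hg : ContDiff ℝ 2 g) (k : Fin 2) :
    Differentiable ℝ (partialX g k) :=
  ((hg.fderiv_right (m := 1) (by norm_num)).differentiable one_ne_zero).clm_apply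
    (differentiable_const _)

lemma partialX_comm (hg : ContDiff ℝ 2 g) (i k : Fin 2) (q : SpaceTime) :
    partialX (partialX g i) k q = partialX (partialX g k) i q := by
  have hd : DifferentiableAt ℝ (fderiv ℝ g) q :=
    ((hg.fderiv_right (m := 1) (by norm_num)).differentiable one_ne_zero) q
  have hsecond : ∀ i k, partialX (partialX g i) k q = fderiv ℝ (fderiv ℝ g) q (stX k) (stX i) := by
    intro i k
    change fderiv ℝ (fun q => fderiv ℝ g q (stX i)) q (stX k) = _
    rw [fderiv_clm_apply hd (differentiableAt_const _)]
    simp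
  rw [hsecond, hsecond, (hg.contDiffAt.isSymmSndFDerivAt (by simp)).eq]

end PartialX

def IsDerivAlong (Zop : (ℝ → E2 → E2 → ℝ) → ℝ → E2 → E2 → ℝ) (Z : Phase → Phase) : Prop :=
  ∀ F, Differentiable ℝ (uncurryPhase F) →
    uncurryPhase (Zop F) = fun p => fderiv ℝ (uncurryPhase F) p (Z p)

theorem commutator_eq_fderiv_lieBracket {A B : (ℝ → E2 → E2 → ℝ) → ℝ → E2 → E2 → ℝ}
    {X Y : Phase → Phase} (hA : IsDerivAlong A X) (hB : IsDerivAlong B Y)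
    (hX : Differentiable ℝ X) (hY : Differentiable ℝ Y) {f : ℝ → E2 → E2 → ℝ}
    (hf : ContDiff ℝ 2 (uncurryPhase f)) (t : ℝ) (x v : E2) :
    A (B f) t x v - B (A f) t x v
      = fderiv ℝ (uncurryPhase f) (t, x, v) (lieBracket ℝ X Y (t, x, v)) := by
  have hDf : Differentiable ℝ (fderiv ℝ (uncurryPhase f)) :=
    (hf.fderiv_right (m := 1) (by norm_num)).differentiable one_ne_zero
  have hAf := hA f (hf.differentiable two_ne_zero)
  have hBf := hB f (hf.differentiable two_ne_zero)
  have hAd : Differentiable ℝ (uncurryPhase (A f)) := by rw [hAf]; exact hDf.clm_apply hX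
  have hBd : Differentiable ℝ (uncurryPhase (B f)) := by rw [hBf]; exact hDf.clm_apply hY
  rw [fderiv_apply_lieBracket hf.contDiffAt (by simp) (hY _) (hX _)]
  change uncurryPhase (A (B f)) (t, x, v) - uncurryPhase (B (A f)) (t, x, v) = _
  rw [hA _ hBd, hB _ hAd, hBf, hAf]

def freeField (p : Phase) : Phase := eT + ∑ k, p.2.2 k • eX k + ∑ k, p.2.1 k • eV k

def forceField (φ : ℝ → E2 → ℝ) (p : Phase) : Phase :=
  ∑ k, partialX (uncurrySpaceTime φ) k (toSpaceTime p) • eV k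

def transportField (φ : ℝ → E2 → ℝ) (μ : ℝ) : Phase → Phase := freeField + (-μ) • forceField φ

def uField (i : Fin 2) (p : Phase) : Phase := Real.exp p.1 • (eX i + eV i)

def sField (i : Fin 2) (p : Phase) : Phase := Real.exp (-p.1) • (eX i - eV i)

def lField (p : Phase) : Phase := ∑ k, (p.2.1 k • eX k + p.2.2 k • eV k)

def rField (p : Phase) : Phase :=
  p.2.1 0 • eX 1 - p.2.1 1 • eX 0 + p.2.2 0 • eV 1 - p.2.2 1 • eV 0

section DerivationsAlongFields

lemma isDerivAlong_Tphi {φ : ℝ → E2 → ℝ} (hφ : Differentiable ℝ (uncurrySpaceTime φ)) (μ : ℝ) :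
    IsDerivAlong (Tphi φ μ) (transportField φ μ) := by
  intro F hF
  funext ⟨t, x, v⟩
  simp only [uncurryPhase, Tphi, transportField, freeField, forceField, Pi.add_apply,
    Pi.smul_apply, map_add, map_sum, map_smul, smul_eq_mul, toSpaceTime_apply,
    pt_eq_fderiv (hF _), px_eq_fderiv (hF _), pv_eq_fderiv (hF _), pxM_eq_partialX (hφ _)]
  ring

lemma isDerivAlong_Uop (i : Fin 2) : IsDerivAlong (Uop i) (uField i) := by
  intro F hF
  funext ⟨t, x, v⟩
  simp only [uncurryPhase, Uop, uField, map_add, map_smul, smul_eq_mul,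
    px_eq_fderiv (hF _), pv_eq_fderiv (hF _)]

lemma isDerivAlong_Sop (i : Fin 2) : IsDerivAlong (Sop i) (sField i) := by
  intro F hF
  funext ⟨t, x, v⟩
  simp only [uncurryPhase, Sop, sField, map_sub, map_smul, smul_eq_mul,
    px_eq_fderiv (hF _), pv_eq_fderiv (hF _)]

lemma isDerivAlong_Lop : IsDerivAlong Lop lField := by
  intro F hF
  funext ⟨t, x, v⟩
  simp only [uncurryPhase, Lop, lField, map_sum, map_add, map_smul, smul_eq_mul,
    px_eq_fderiv (hF _), pv_eq_fderiv (hF _)]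

lemma isDerivAlong_Rop : IsDerivAlong Rop rField := by
  intro F hF
  funext ⟨t, x, v⟩
  simp only [uncurryPhase, Rop, rField, map_add, map_sub, map_smul, smul_eq_mul,
    px_eq_fderiv (hF _), pv_eq_fderiv (hF _)]

end DerivationsAlongFields

section FieldDerivatives

variable (p w : Phase)

lemma fderiv_x_apply (k : Fin 2) : fderiv ℝ (fun p : Phase => p.2.1 k) p w = w.2.1 k :=
  congrArg (· w) ((EuclideanSpace.proj k).comp ((ContinuousLinearMap.fst ℝ E2 E2).comp
    (ContinuousLinearMap.snd ℝ ℝ (E2 × E2)))).fderiv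

lemma fderiv_v_apply (k : Fin 2) : fderiv ℝ (fun p : Phase => p.2.2 k) p w = w.2.2 k :=
  congrArg (· w) ((EuclideanSpace.proj k).comp ((ContinuousLinearMap.snd ℝ E2 E2).comp
    (ContinuousLinearMap.snd ℝ ℝ (E2 × E2)))).fderiv

lemma fderiv_freeField_apply : fderiv ℝ freeField p w = freeField w - eT := by
  unfold freeField
  simp (disch := fun_prop) [fderiv_fun_add, fderiv_smul_const, fderiv_x_apply, fderiv_v_apply]
  abel

lemma fderiv_lField_apply : fderiv ℝ lField p w = lField w := by
  unfold lField
  simp (disch := fun_prop) [fderiv_fun_add, fderiv_smul_const, fderiv_x_apply, fderiv_v_apply]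

lemma fderiv_rField_apply : fderiv ℝ rField p w = rField w := by
  unfold rField
  simp (disch := fun_prop) [fderiv_fun_add, fderiv_fun_sub, fderiv_smul_const, fderiv_x_apply,
    fderiv_v_apply]

lemma fderiv_uField_apply (i : Fin 2) : fderiv ℝ (uField i) p w = w.1 • uField i p := by
  unfold uField
  rw [fderiv_smul_const (by fun_prop)]
  simp [fderiv_fst, smul_comm w.1, mul_smul]

lemma fderiv_sField_apply (i : Fin 2) : fderiv ℝ (sField i) p w = -w.1 • sField i p := by
  unfold sField
  rw [fderiv_smul_const (by fun_prop)]
  simp [fderiv_fst, smul_comm w.1, mul_smul]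

lemma fderiv_forceField_apply {φ : ℝ → E2 → ℝ}
    (hφ : ∀ k, Differentiable ℝ (partialX (uncurrySpaceTime φ) k)) :
    fderiv ℝ (forceField φ) p w
      = ∑ k, fderiv ℝ (partialX (uncurrySpaceTime φ) k) (toSpaceTime p) (toSpaceTime w) • eV k := by
  have hk : ∀ k, HasFDerivAt (fun p => partialX (uncurrySpaceTime φ) k (toSpaceTime p) • eV k)
      (((fderiv ℝ (partialX (uncurrySpaceTime φ) k) (toSpaceTime p)).comp toSpaceTime).smulRight
        (eV k)) p :=
    fun k => ((hφ k _).hasFDerivAt.comp p toSpaceTime.hasFDerivAt).smul_const (eV k)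
  rw [show forceField φ = fun p => ∑ k, partialX (uncurrySpaceTime φ) k (toSpaceTime p) • eV k
    from rfl, (HasFDerivAt.fun_sum fun k _ => hk k).fderiv]
  simp

end FieldDerivatives

section FreeTransportSymmetries

variable (p : Phase)

lemma lieBracket_freeField_uField (i : Fin 2) : lieBracket ℝ freeField (uField i) p = 0 := by
  rw [lieBracket, fderiv_freeField_apply, fderiv_uField_apply]
  ext <;> simp [freeField, uField, eT, eX, eV]

lemma lieBracket_freeField_sField (i : Fin 2) : lieBracket ℝ freeField (sField i) p = 0 := by
  rw [lieBracket, fderiv_freeField_apply, fderiv_sField_apply]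
  ext <;> simp [freeField, sField, eT, eX, eV]

lemma lieBracket_freeField_lField : lieBracket ℝ freeField lField p = 0 := by
  rw [lieBracket, fderiv_freeField_apply, fderiv_lField_apply]
  ext <;> simp [freeField, lField, eT, eX, eV]

lemma lieBracket_freeField_rField : lieBracket ℝ freeField rField p = 0 := by
  rw [lieBracket, fderiv_freeField_apply, fderiv_rField_apply]
  ext <;> simp [freeField, rField, eT, eX, eV] <;> ring

end FreeTransportSymmetries

section ForceBrackets

variable {φ : ℝ → E2 → ℝ} (hφ : ContDiff ℝ 2 (uncurrySpaceTime φ))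
include hφ

lemma differentiable_transportField (μ : ℝ) : Differentiable ℝ (transportField φ μ) := by
  have := differentiable_partialX hφ
  unfold transportField freeField forceField
  fun_prop

lemma lieBracket_transportField (μ : ℝ) {Z : Phase → Phase} {p : Phase}
    (hZ : lieBracket ℝ freeField Z p = 0) :
    lieBracket ℝ (transportField φ μ) Z p = -μ • lieBracket ℝ (forceField φ) Z p := by
  have hfree : Differentiable ℝ freeField := by unfold freeField; fun_prop
  have hforce : Differentiable ℝ (forceField φ) := by
    have := differentiable_partialX hφ
    unfold forceField; fun_prop
  rw [transportField, lieBracket_add_left (hfree p) ((hforce.const_smul (-μ)) p),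
    lieBracket_const_smul_left (hforce p), hZ, zero_add]

lemma pxM_UxOp (i k : Fin 2) (t : ℝ) (x : E2) :
    pxM (UxOp i φ) k t x = Real.exp t * partialX (partialX (uncurrySpaceTime φ) k) i (t, x) := by
  have h1 := differentiable_partialX hφ
  have h : uncurrySpaceTime (UxOp i φ)
      = fun q => Real.exp q.1 * partialX (uncurrySpaceTime φ) i q :=
    funext fun q => congrArg _ (pxM_eq_partialX ((hφ.differentiable two_ne_zero) q) i)
  have hd : Differentiable ℝ (uncurrySpaceTime (UxOp i φ)) := by rw [h]; fun_prop
  rw [pxM_eq_partialX (hd _), h, ← partialX_comm hφ, partialX,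
    fderiv_fun_mul (by fun_prop) (h1 i _)]
  simp [fderiv_fst, stX, partialX]

lemma pxM_SxOp (i k : Fin 2) (t : ℝ) (x : E2) :
    pxM (SxOp i φ) k t x
      = Real.exp (-t) * partialX (partialX (uncurrySpaceTime φ) k) i (t, x) := by
  have h1 := differentiable_partialX hφ
  have h : uncurrySpaceTime (SxOp i φ)
      = fun q => Real.exp (-q.1) * partialX (uncurrySpaceTime φ) i q :=
    funext fun q => congrArg _ (pxM_eq_partialX ((hφ.differentiable two_ne_zero) q) i)
  have hd : Differentiable ℝ (uncurrySpaceTime (SxOp i φ)) := by rw [h]; fun_prop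
  rw [pxM_eq_partialX (hd _), h, ← partialX_comm hφ, partialX,
    fderiv_fun_mul (by fun_prop) (h1 i _)]
  simp [fderiv_fst, stX, partialX]

lemma pxM_LxOp (k : Fin 2) (t : ℝ) (x : E2) :
    pxM (fun t x => LxOp φ t x + (-2 : ℝ) * φ t x) k t x
      = ∑ j, x j * partialX (partialX (uncurrySpaceTime φ) k) j (t, x)
        - partialX (uncurrySpaceTime φ) k (t, x) := by
  have h1 := differentiable_partialX hφ
  have h0 := hφ.differentiable two_ne_zero
  have h : uncurrySpaceTime (fun t x => LxOp φ t x + (-2 : ℝ) * φ t x)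
      = fun q => ∑ j, q.2 j * partialX (uncurrySpaceTime φ) j q
          + (-2 : ℝ) * uncurrySpaceTime φ q :=
    funext fun q => by simp only [uncurrySpaceTime, LxOp, pxM_eq_partialX (h0 _)]
  have hd : Differentiable ℝ (uncurrySpaceTime (fun t x => LxOp φ t x + (-2 : ℝ) * φ t x)) := by
    rw [h]; fun_prop
  rw [pxM_eq_partialX (hd _), partialX, h]
  simp only [partialX_comm hφ k]
  simp (disch := fun_prop) [fderiv_fun_add, fderiv_fun_mul, fderiv_apply_stX, partialX_snd_apply,
    Fin.sum_univ_two]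
  fin_cases k <;> simp [stX] <;> ring

lemma pxM_RxOp (k : Fin 2) (t : ℝ) (x : E2) :
    pxM (RxOp φ) k t x
      = x 0 * partialX (partialX (uncurrySpaceTime φ) k) 1 (t, x)
        - x 1 * partialX (partialX (uncurrySpaceTime φ) k) 0 (t, x)
        + ![partialX (uncurrySpaceTime φ) 1 (t, x), -partialX (uncurrySpaceTime φ) 0 (t, x)] k := by
  have h1 := differentiable_partialX hφ
  have h0 := hφ.differentiable two_ne_zero
  have h : uncurrySpaceTime (RxOp φ) = fun q => q.2 0 * partialX (uncurrySpaceTime φ) 1 q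
      - q.2 1 * partialX (uncurrySpaceTime φ) 0 q :=
    funext fun q => by simp only [uncurrySpaceTime, RxOp, pxM_eq_partialX (h0 _)]
  have hd : Differentiable ℝ (uncurrySpaceTime (RxOp φ)) := by rw [h]; fun_prop
  rw [pxM_eq_partialX (hd _), partialX, h]
  simp only [partialX_comm hφ k]
  simp (disch := fun_prop) [fderiv_fun_sub, fderiv_fun_mul, fderiv_apply_stX, partialX_snd_apply]
  fin_cases k <;> simp [stX] <;> ring

lemma lieBracket_transportField_uField (μ : ℝ) (i : Fin 2) (t : ℝ) (x v : E2) :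
    lieBracket ℝ (transportField φ μ) (uField i) (t, x, v)
      = μ • ∑ k, pxM (UxOp i φ) k t x • eV k := by
  rw [lieBracket_transportField hφ μ (lieBracket_freeField_uField _ i), lieBracket,
    fderiv_uField_apply, fderiv_forceField_apply _ _ (differentiable_partialX hφ)]
  simp only [pxM_UxOp hφ, uField, forceField, map_smul, map_add, toSpaceTime_eX, toSpaceTime_eV,
    add_zero, fderiv_apply_stX]
  ext <;> simp [eX, eV, toSpaceTime_apply]

lemma lieBracket_transportField_sField (μ : ℝ) (i : Fin 2) (t : ℝ) (x v : E2) :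
    lieBracket ℝ (transportField φ μ) (sField i) (t, x, v)
      = μ • ∑ k, pxM (SxOp i φ) k t x • eV k := by
  rw [lieBracket_transportField hφ μ (lieBracket_freeField_sField _ i), lieBracket,
    fderiv_sField_apply, fderiv_forceField_apply _ _ (differentiable_partialX hφ)]
  simp only [pxM_SxOp hφ, sField, forceField, map_smul, map_sub, toSpaceTime_eX, toSpaceTime_eV,
    sub_zero, fderiv_apply_stX]
  ext <;> simp [eX, eV, toSpaceTime_apply]

lemma lieBracket_transportField_lField (μ : ℝ) (t : ℝ) (x v : E2) :
    lieBracket ℝ (transportField φ μ) lField (t, x, v)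
      = μ • ∑ k, pxM (fun t x => LxOp φ t x + (-2 : ℝ) * φ t x) k t x • eV k := by
  rw [lieBracket_transportField hφ μ (lieBracket_freeField_lField _), lieBracket,
    fderiv_lField_apply, fderiv_forceField_apply _ _ (differentiable_partialX hφ)]
  simp only [pxM_LxOp hφ, lField, forceField, map_smul, map_add, map_sum, toSpaceTime_eX,
    toSpaceTime_eV, smul_zero, add_zero, fderiv_apply_stX]
  ext <;> simp [eX, eV, toSpaceTime_apply]
  split_ifs <;> ring

lemma lieBracket_transportField_rField (μ : ℝ) (t : ℝ) (x v : E2) :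
    lieBracket ℝ (transportField φ μ) rField (t, x, v)
      = μ • ∑ k, pxM (RxOp φ) k t x • eV k := by
  rw [lieBracket_transportField hφ μ (lieBracket_freeField_rField _), lieBracket,
    fderiv_rField_apply, fderiv_forceField_apply _ _ (differentiable_partialX hφ)]
  simp only [pxM_RxOp hφ, rField, forceField, map_smul, map_add, map_sub, toSpaceTime_eX,
    toSpaceTime_eV, smul_zero, add_zero, sub_zero, fderiv_apply_stX]
  ext <;> simp [eX, eV, toSpaceTime_apply]
  split_ifs <;> ring

lemma Tphi_commutator_eq_of_lieBracket {Zop : (ℝ → E2 → E2 → ℝ) → ℝ → E2 → E2 → ℝ}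
    {Z : Phase → Phase} (hZop : IsDerivAlong Zop Z) (hZ : Differentiable ℝ Z) (μ : ℝ)
    {f : ℝ → E2 → E2 → ℝ} (hf : ContDiff ℝ 2 (uncurryPhase f)) {t : ℝ} {x v : E2} {c : Fin 2 → ℝ}
    (hbracket : lieBracket ℝ (transportField φ μ) Z (t, x, v) = μ • ∑ k, c k • eV k) :
    Tphi φ μ (Zop f) t x v - Zop (Tphi φ μ f) t x v = μ * ∑ k, c k * pv f k t x v := by
  rw [commutator_eq_fderiv_lieBracket (isDerivAlong_Tphi (hφ.differentiable two_ne_zero) μ) hZop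
    (differentiable_transportField hφ μ) hZ hf, hbracket]
  simp only [map_smul, map_sum, smul_eq_mul, pv_eq_fderiv ((hf.differentiable two_ne_zero) _)]

end ForceBrackets

theorem stmt12_general (φ : ℝ → E2 → ℝ)
    (hφ : ContDiff ℝ 2 (fun p : ℝ × E2 => φ p.1 p.2))
    (μ : ℝ)
    (f : ℝ → E2 → E2 → ℝ)
    (hf : ContDiff ℝ 2 (fun p : ℝ × E2 × E2 => f p.1 p.2.1 p.2.2)) :
    ∀ (t : ℝ) (x v : E2),
      (∀ i : Fin 2,
        Tphi φ μ (Uop i f) t x v - Uop i (Tphi φ μ f) t x v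
          = μ * ∑ k, pxM (UxOp i φ) k t x * pv f k t x v ∧
        Tphi φ μ (Sop i f) t x v - Sop i (Tphi φ μ f) t x v
          = μ * ∑ k, pxM (SxOp i φ) k t x * pv f k t x v) ∧
      Tphi φ μ (Lop f) t x v - Lop (Tphi φ μ f) t x v
        = μ * ∑ k, pxM (fun t x => LxOp φ t x + (-2 : ℝ) * φ t x) k t x * pv f k t x v ∧
      Tphi φ μ (Rop f) t x v - Rop (Tphi φ μ f) t x v
        = μ * ∑ k, pxM (RxOp φ) k t x * pv f k t x v := by
  intro t x v
  have hφ' : ContDiff ℝ 2 (uncurrySpaceTime φ) := hφ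
  have hf' : ContDiff ℝ 2 (uncurryPhase f) := hf
  refine ⟨fun i => ⟨?_, ?_⟩, ?_, ?_⟩
  · exact Tphi_commutator_eq_of_lieBracket hφ' (isDerivAlong_Uop i) (by unfold uField; fun_prop) μ
      hf' (lieBracket_transportField_uField hφ' μ i t x v)
  · exact Tphi_commutator_eq_of_lieBracket hφ' (isDerivAlong_Sop i) (by unfold sField; fun_prop) μ
      hf' (lieBracket_transportField_sField hφ' μ i t x v)
  · exact Tphi_commutator_eq_of_lieBracket hφ' isDerivAlong_Lop (by unfold lField; fun_prop) μ
      hf' (lieBracket_transportField_lField hφ' μ t x v)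
  · exact Tphi_commutator_eq_of_lieBracket hφ' isDerivAlong_Rop (by unfold rField; fun_prop) μ
      hf' (lieBracket_transportField_rField hφ' μ t x v)

/-- First-order commutation formula: `[T_φ, Z] = μ ∇_x(Zφ + c_Z φ)·∇_v`, with
`c_L = −2` and `c_Z = 0` for `Z ≠ L`, acting on `C²` functions of `(t,x,v)`. -/
theorem stmt12 (φ : ℝ → E2 → ℝ)
    (hφ : ContDiff ℝ 2 (fun p : ℝ × E2 => φ p.1 p.2))
    (μ : ℝ) (hμ : μ = 1 ∨ μ = -1)
    (f : ℝ → E2 → E2 → ℝ)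
    (hf : ContDiff ℝ 2 (fun p : ℝ × E2 × E2 => f p.1 p.2.1 p.2.2)) :
    ∀ (t : ℝ) (x v : E2),
      (∀ i : Fin 2,
        Tphi φ μ (Uop i f) t x v - Uop i (Tphi φ μ f) t x v
          = μ * ∑ k, pxM (UxOp i φ) k t x * pv f k t x v ∧
        Tphi φ μ (Sop i f) t x v - Sop i (Tphi φ μ f) t x v
          = μ * ∑ k, pxM (SxOp i φ) k t x * pv f k t x v) ∧
      Tphi φ μ (Lop f) t x v - Lop (Tphi φ μ f) t x v
        = μ * ∑ k, pxM (fun t x => LxOp φ t x + (-2 : ℝ) * φ t x) k t x * pv f k t x v ∧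
      Tphi φ μ (Rop f) t x v - Rop (Tphi φ μ f) t x v
        = μ * ∑ k, pxM (RxOp φ) k t x * pv f k t x v :=
  stmt12_general φ hφ μ f hf
end
end

section
/- Let g : ℝ² × ℝ² → ℝ be C¹ in its second variable with sup_{(s,u)} (⟨s⟩+⟨u⟩)⁶ |∇_u g(s,u)| =: K < ∞ and g integrable. Then for all t ≥ 0 and x ∈ ℝ², |∫_{ℝ²} g(y, e^{−t}(x − e^{−t}y)) dy − ∫_{ℝ²} g(y, e^{−t}x) dy| ≤ C·K/(e^t + |x|)², for a universal constant C. -/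
open Real MeasureTheory

/-!
By the mean value theorem in the second variable, the integrand of the difference is bounded by
`|∇_u g(y, u)|` on the segment from `e⁻ᵗx` to `e⁻ᵗ(x - e⁻ᵗy)` times its length `e⁻²ᵗ|y|`.
Along that segment `⟨e⁻ᵗx⟩ ≤ ⟨u⟩ + ⟨y⟩`, so the weight `(⟨y⟩ + ⟨u⟩)⁶` dominates
`⟨y⟩⁴⟨e⁻ᵗx⟩²`; since `e⁻ᵗ(eᵗ + |x|) = 1 + |e⁻ᵗx| ≤ √2⟨e⁻ᵗx⟩`, the integrand is at most
`2K (eᵗ + |x|)⁻² ⟨y⟩⁻³`, and `⟨y⟩⁻³` is integrable on `ℝ²`.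
-/

noncomputable section

/-- The Japanese bracket `⟨w⟩ = (1+|w|²)^{1/2}`. -/
def jb (w : E2) : ℝ := Real.sqrt (1 + ‖w‖ ^ 2)

lemma jb_pos (w : E2) : 0 < jb w := Real.sqrt_pos.2 (by positivity)

lemma jb_sq (w : E2) : jb w ^ 2 = 1 + ‖w‖ ^ 2 := Real.sq_sqrt (by positivity)

lemma norm_le_jb (w : E2) : ‖w‖ ≤ jb w :=
  (Real.le_sqrt (norm_nonneg w) (by positivity)).2 (by linarith)

lemma one_add_norm_sq_le_two_mul_jb_sq (w : E2) : (1 + ‖w‖) ^ 2 ≤ 2 * jb w ^ 2 := by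
  rw [jb_sq]; nlinarith [sq_nonneg (1 - ‖w‖)]

lemma jb_add_le (v w : E2) : jb (v + w) ≤ jb v + ‖w‖ := by
  refine (Real.sqrt_le_left (by linarith [jb_pos v, norm_nonneg w])).2 ?_
  nlinarith [norm_add_le v w, norm_le_jb v, jb_sq v, norm_nonneg (v + w), norm_nonneg w]

lemma jb_add_smul_le (u y : E2) {c : ℝ} (hc : |c| ≤ 1) : jb (u + c • y) ≤ jb u + jb y := by
  have : ‖c • y‖ ≤ jb y := by
    rw [norm_smul, Real.norm_eq_abs]
    nlinarith [norm_le_jb y, norm_nonneg y, abs_nonneg c]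
  linarith [jb_add_le u (c • y)]

lemma inv_jb_pow_three_eq (y : E2) : (jb y ^ 3)⁻¹ = (1 + ‖y‖ ^ 2) ^ (-3 / 2 : ℝ) := by
  rw [jb, Real.sqrt_eq_rpow, ← Real.rpow_natCast, ← Real.rpow_mul (by positivity),
    ← Real.rpow_neg (by positivity)]
  norm_num

lemma integrable_inv_jb_pow_three : Integrable (fun y : E2 => (jb y ^ 3)⁻¹) := by
  simp_rw [inv_jb_pow_three_eq]
  exact integrable_rpow_neg_one_add_norm_sq (by norm_num)

lemma integral_inv_jb_pow_three_pos : 0 < ∫ y : E2, (jb y ^ 3)⁻¹ := by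
  have hpos (y : E2) : 0 < (jb y ^ 3)⁻¹ := inv_pos.2 (pow_pos (jb_pos y) 3)
  rw [integral_pos_iff_support_of_nonneg (fun y => (hpos y).le) integrable_inv_jb_pow_three,
    Function.support_eq_univ (fun y => (hpos y).ne')]
  exact isOpen_univ.measure_pos volume Set.univ_nonempty

lemma jb_smul_le_of_mem_segment {a : ℝ} (ha0 : 0 < a) (ha1 : a ≤ 1) (x y : E2) {u : E2}
    (hu : u ∈ segment ℝ (a • x) (a • (x - a • y))) : jb (a • x) ≤ jb u + jb y := by
  rw [segment_eq_image'] at hu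
  obtain ⟨θ, ⟨hθ0, hθ1⟩, rfl⟩ := hu
  have hc : |θ * a ^ 2| ≤ 1 := by
    rw [abs_of_nonneg (by positivity)]
    nlinarith [pow_le_one₀ ha0.le ha1 (n := 2), sq_nonneg a]
  calc jb (a • x) = jb ((a • x + θ • (a • (x - a • y) - a • x)) + (θ * a ^ 2) • y) := by
        congr 1; module
    _ ≤ _ := jb_add_smul_le _ _ hc

theorem abs_sub_le_of_weighted_fderiv_le {f : E2 → ℝ} (hf : Differentiable ℝ f) {K a : ℝ}
    (x y : E2) (hK : ∀ u, (jb y + jb u) ^ 6 * ‖fderiv ℝ f u‖ ≤ K) (ha0 : 0 < a) (ha1 : a ≤ 1) :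
    |f (a • (x - a • y)) - f (a • x)| ≤ K / (jb y ^ 4 * jb (a • x) ^ 2) * (a ^ 2 * ‖y‖) := by
  have hbound : ∀ u ∈ segment ℝ (a • x) (a • (x - a • y)),
      ‖fderiv ℝ f u‖ ≤ K / (jb y ^ 4 * jb (a • x) ^ 2) := by
    intro u hu
    have hle := jb_smul_le_of_mem_segment ha0 ha1 x y hu
    have hjy := jb_pos y
    have hju := jb_pos u
    have hjax := jb_pos (a • x)
    have hweight : jb y ^ 4 * jb (a • x) ^ 2 ≤ (jb y + jb u) ^ 6 := by
      calc jb y ^ 4 * jb (a • x) ^ 2 ≤ (jb y + jb u) ^ 4 * (jb y + jb u) ^ 2 := by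
            gcongr <;> linarith
        _ = _ := by ring
    rw [le_div_iff₀ (by positivity)]
    nlinarith [hK u, norm_nonneg (fderiv ℝ f u)]
  have hdist : ‖a • (x - a • y) - a • x‖ = a ^ 2 * ‖y‖ := by
    rw [show a • (x - a • y) - a • x = -(a ^ 2 • y) by module, norm_neg, norm_smul,
      Real.norm_eq_abs, abs_of_nonneg (by positivity)]
  rw [← Real.norm_eq_abs, ← hdist]
  exact (convex_segment _ _).norm_image_sub_le_of_norm_fderiv_le (fun u _ => hf u) hbound
    (left_mem_segment _ _ _) (right_mem_segment _ _ _)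

lemma div_jb_mul_displacement_le {K a : ℝ} (hK : 0 ≤ K) (ha : 0 < a) (x y : E2) :
    K / (jb y ^ 4 * jb (a • x) ^ 2) * (a ^ 2 * ‖y‖) ≤
      2 * K / (a⁻¹ + ‖x‖) ^ 2 * (jb y ^ 3)⁻¹ := by
  have hjy := jb_pos y
  have hjax := jb_pos (a • x)
  have hsmul : a * (a⁻¹ + ‖x‖) = 1 + ‖a • x‖ := by
    rw [mul_add, mul_inv_cancel₀ ha.ne', norm_smul, Real.norm_eq_abs, abs_of_pos ha]
  have hxfactor : a ^ 2 / jb (a • x) ^ 2 ≤ 2 / (a⁻¹ + ‖x‖) ^ 2 := by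
    rw [div_le_div_iff₀ (by positivity) (by positivity), ← mul_pow, hsmul]
    linarith [one_add_norm_sq_le_two_mul_jb_sq (a • x)]
  have hyfactor : ‖y‖ / jb y ^ 4 ≤ (jb y ^ 3)⁻¹ :=
    calc ‖y‖ / jb y ^ 4 ≤ jb y / jb y ^ 4 := by gcongr; exact norm_le_jb y
      _ = (jb y ^ 3)⁻¹ := by field_simp
  calc K / (jb y ^ 4 * jb (a • x) ^ 2) * (a ^ 2 * ‖y‖)
      = K * (a ^ 2 / jb (a • x) ^ 2 * (‖y‖ / jb y ^ 4)) := by ring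
    _ ≤ K * (2 / (a⁻¹ + ‖x‖) ^ 2 * (jb y ^ 3)⁻¹) := by gcongr
    _ = 2 * K / (a⁻¹ + ‖x‖) ^ 2 * (jb y ^ 3)⁻¹ := by ring

/-- If `g : ℝ² × ℝ² → ℝ` is `C¹` in its second variable with
`sup (⟨s⟩+⟨u⟩)⁶ |∇_u g| ≤ K` and `g` integrable, then for all `t ≥ 0` and `x`,
`|∫ g(y, e^{−t}(x − e^{−t}y)) dy − ∫ g(y, e^{−t}x) dy| ≤ C K/(e^t+|x|)²`
for a universal constant `C`. -/
theorem stmt18 :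
    ∃ C : ℝ, 0 < C ∧
      ∀ (g : E2 → E2 → ℝ) (K : ℝ),
        (∀ s : E2, ContDiff ℝ 1 (g s)) →
        (∀ s u : E2, (jb s + jb u) ^ 6 * ‖fderiv ℝ (g s) u‖ ≤ K) →
        Integrable (fun p : E2 × E2 => g p.1 p.2) →
        ∀ (t : ℝ) (x : E2), 0 ≤ t →
        Integrable (fun y : E2 => g y (Real.exp (-t) • (x - Real.exp (-t) • y))) →
        Integrable (fun y : E2 => g y (Real.exp (-t) • x)) →
        |(∫ y : E2, g y (Real.exp (-t) • (x - Real.exp (-t) • y)))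
            - ∫ y : E2, g y (Real.exp (-t) • x)|
          ≤ C * K / (Real.exp t + ‖x‖) ^ 2 := by
  refine ⟨2 * ∫ y : E2, (jb y ^ 3)⁻¹, by linarith [integral_inv_jb_pow_three_pos], ?_⟩
  intro g K hg hK _ t x ht hint₁ hint₂
  have hK0 : 0 ≤ K := (by positivity : 0 ≤ (jb 0 + jb 0) ^ 6 * ‖fderiv ℝ (g 0) 0‖).trans (hK 0 0)
  have ha1 : Real.exp (-t) ≤ 1 := Real.exp_le_one_iff.2 (by linarith)
  have hexp : (Real.exp (-t))⁻¹ = Real.exp t := by rw [Real.exp_neg, inv_inv]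
  have hpointwise (y : E2) :
      ‖g y (Real.exp (-t) • (x - Real.exp (-t) • y)) - g y (Real.exp (-t) • x)‖ ≤
        2 * K / (Real.exp t + ‖x‖) ^ 2 * (jb y ^ 3)⁻¹ := by
    rw [Real.norm_eq_abs, ← hexp]
    exact (abs_sub_le_of_weighted_fderiv_le ((hg y).differentiable one_ne_zero) x y (hK y)
      (Real.exp_pos _) ha1).trans (div_jb_mul_displacement_le hK0 (Real.exp_pos _) x y)
  calc |(∫ y : E2, g y (Real.exp (-t) • (x - Real.exp (-t) • y)))
          - ∫ y : E2, g y (Real.exp (-t) • x)|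
      = ‖∫ y : E2, (g y (Real.exp (-t) • (x - Real.exp (-t) • y)) - g y (Real.exp (-t) • x))‖ := by
        rw [integral_sub hint₁ hint₂, Real.norm_eq_abs]
    _ ≤ ∫ y : E2, 2 * K / (Real.exp t + ‖x‖) ^ 2 * (jb y ^ 3)⁻¹ :=
        norm_integral_le_of_norm_le (integrable_inv_jb_pow_three.const_mul _)
          (.of_forall hpointwise)
    _ = (2 * ∫ y : E2, (jb y ^ 3)⁻¹) * K / (Real.exp t + ‖x‖) ^ 2 := by
        rw [integral_const_mul]; ring
end
end
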